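/- arXiv:1503.04994 — 2 statements merged into one kernel-verified Lean document; each statement's English description precedes it below -/
import Mathlib

section
/- For any two double-vertex dominators {v1, v2} and {v3, v4} of a vertex u, there exists a double-vertex dominator {v5, v6} of u that is dominated by both {v1, v2} and {v3, v4} (the double-vertex dominators of u form a meet-semilattice under the domination order). -/
/-- A nonempty directed path `p` from `a` to `b` in the graph with edge relation `E`. -/
def IsPath {V : Type*} (E : V → V → Prop) (p : List V) (a b : V) : Prop :=
  p ≠ [] ∧ p.head? = some a ∧ p.getLast? = some b ∧ p.Chain' E

/-- `A` dominates `B` with respect to `root`: every path from a vertex of `B` to `root`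
contains a vertex of `A`. -/
def Dominates {V : Type*} (E : V → V → Prop) (root : V) (A B : Set V) : Prop :=
  ∀ b ∈ B, ∀ p : List V, IsPath E p b root → ∃ a ∈ A, a ∈ p

/-- `A` is a dominator of `B`: it dominates `B` and no proper subset `A \ {v}` does. -/
def IsDominator {V : Type*} (E : V → V → Prop) (root : V) (A B : Set V) : Prop :=
  Dominates E root A B ∧ ∀ v ∈ A, ¬ Dominates E root (A \ {v}) B

/-- `{v, w}` is a double-vertex dominator of `u`. -/
def DoubleDom {V : Type*} (E : V → V → Prop) (root : V) (u v w : V) : Prop :=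
  v ≠ w ∧ Dominates E root {v, w} {u} ∧
    ¬ Dominates E root {v} {u} ∧ ¬ Dominates E root {w} {u}

/-- The edge relation `E` is acyclic. -/
def Acyclic {V : Type*} (E : V → V → Prop) : Prop :=
  ∀ a b, E a b → ¬ Relation.ReflTransGen E b a

/-! If `{v₃, v₄}` dominates both `v₁` and `v₂`, then `{v₁, v₂}` is already below both pairs, and
symmetrically. Otherwise, after relabelling, some path from `v₂` to `root` avoids `{v₃, v₄}` and
some path from `v₄` avoids `{v₁, v₂}`. On a path from `u` to `root`, the first vertex among
`v₁, …, v₄` can then be neither `v₂` nor `v₄` (following that path to it and then the escaping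
path would avoid `{v₃, v₄}`, resp. `{v₁, v₂}`), so `{v₁, v₃}` dominates `u`. Applying the same
first-vertex argument to a path from `u` avoiding `v₃` shows that `{v₃, v₄}` dominates `v₁`, and
symmetrically `{v₁, v₂}` dominates `v₃`. -/

section

variable {V : Type*} {E : V → V → Prop} {root : V}

namespace IsPath

lemma head_mem {p : List V} {a b : V} (hp : IsPath E p a b) : a ∈ p :=
  List.mem_of_mem_head? hp.2.1

lemma append {p q : List V} {a b c : V} (hp : IsPath E p a b) (hq : IsPath E q b c) :
    ∃ r, IsPath E r a c ∧ ∀ x ∈ r, x ∈ p ∨ x ∈ q := by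
  obtain ⟨hp₀, hpa, hpb, hpE⟩ := hp
  obtain ⟨hq₀, hqb, hqc, hqE⟩ := hq
  obtain ⟨b', t, rfl⟩ := List.exists_cons_of_ne_nil hq₀
  obtain rfl : b' = b := by simpa using hqb
  refine ⟨p ++ t, ⟨by simp [hp₀], ?_, ?_, ?_⟩, ?_⟩
  · simp [List.head?_append, hpa]
  · rw [List.getLast?_cons] at hqc
    cases h : t.getLast? <;> simp_all [List.getLast?_append]
  · refine List.isChain_append.2 ⟨hpE, hqE.tail, ?_⟩
    simp only [hpb, Option.mem_some_iff, forall_eq']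
    exact hqE.rel_head?
  · intro x hx
    rcases List.mem_append.1 hx with h | h
    · exact .inl h
    · exact .inr (List.mem_cons_of_mem _ h)

lemma exists_first_mem {p : List V} {a b : V} (hp : IsPath E p a b) {S : Set V}
    (hS : ∃ s ∈ p, s ∈ S) :
    ∃ s ∈ p, s ∈ S ∧ ∃ q, IsPath E q a s ∧ ∀ y ∈ q, y ∈ S → y = s := by
  classical
  obtain ⟨s, hs⟩ := Option.isSome_iff_exists.1
    (List.find?_isSome (p := fun x => decide (x ∈ S)) |>.2 (by simpa using hS))
  obtain ⟨hsS, l₁, l₂, rfl, hl₁⟩ := List.find?_eq_some_iff_append.1 hs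
  simp only [decide_eq_true_eq, Bool.not_eq_true', decide_eq_false_iff_not] at hsS hl₁
  refine ⟨s, by simp, hsS, l₁ ++ [s], ⟨by simp, ?_, by simp, ?_⟩, ?_⟩
  · simpa [List.head?_append] using hp.2.1
  · exact hp.2.2.2.prefix ⟨l₂, by simp⟩
  · intro y hy hyS
    rcases List.mem_append.1 hy with h | h
    · exact absurd hyS (hl₁ y h)
    · simpa using h

end IsPath

lemma dominates_of_subset {A B : Set V} (h : B ⊆ A) : Dominates E root A B :=
  fun b hb _ hp => ⟨b, h hb, hp.head_mem⟩

lemma dominates_pair_iff {A : Set V} {x y : V} :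
    Dominates E root A {x, y} ↔ Dominates E root A {x} ∧ Dominates E root A {y} := by
  simp [Dominates]

lemma not_dominates_singleton_iff {A : Set V} {x : V} :
    ¬ Dominates E root A {x} ↔ ∃ p, IsPath E p x root ∧ ∀ a ∈ A, a ∉ p := by
  simp [Dominates]

lemma Dominates.of_isPath {A : Set V} {u x : V} {q : List V} (hu : Dominates E root A {u})
    (hq : IsPath E q u x) (hqA : ∀ a ∈ A, a ∈ q → a = x) : Dominates E root A {x} := by
  rintro _ rfl p hp
  obtain ⟨r, hr, hrqp⟩ := hq.append hp
  obtain ⟨a, haA, har⟩ := hu u rfl r hr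
  refine ⟨a, haA, ?_⟩
  rcases hrqp a har with haq | hap
  · exact hqA a haA haq ▸ hp.head_mem
  · exact hap

lemma DoubleDom.symm {u v w : V} (h : DoubleDom E root u v w) : DoubleDom E root u w v :=
  ⟨h.1.symm, Set.pair_comm v w ▸ h.2.1, h.2.2.2, h.2.2.1⟩

lemma DoubleDom.exists_swap_not_dominates {u v w : V} {A : Set V} (h : DoubleDom E root u v w)
    (hA : ¬ Dominates E root A {v, w}) :
    ∃ v' w', DoubleDom E root u v' w' ∧ ({v', w'} : Set V) = {v, w} ∧
      ¬ Dominates E root A {w'} := by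
  rcases not_and_or.1 (dominates_pair_iff.not.1 hA) with hv | hw
  · exact ⟨w, v, h.symm, Set.pair_comm w v, hv⟩
  · exact ⟨v, w, h, rfl, hw⟩

lemma DoubleDom.cross_of_not_dominates {u v₁ v₂ v₃ v₄ : V}
    (h12 : DoubleDom E root u v₁ v₂) (h34 : DoubleDom E root u v₃ v₄)
    (hv₂ : ¬ Dominates E root {v₃, v₄} {v₂}) (hv₄ : ¬ Dominates E root {v₁, v₂} {v₄}) :
    DoubleDom E root u v₁ v₃ ∧
      Dominates E root {v₁, v₂} {v₁, v₃} ∧ Dominates E root {v₃, v₄} {v₁, v₃} := by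
  set S : Set V := {v₁, v₂, v₃, v₄}
  have hS₁₂ : {v₁, v₂} ⊆ S := by simp [S, Set.insert_subset_iff]
  have hS₃₄ : {v₃, v₄} ⊆ S := by simp [S, Set.insert_subset_iff]
  have first_mem : ∀ p, IsPath E p u root →
      ∃ s ∈ p, (s = v₁ ∨ s = v₃) ∧ ∃ q, IsPath E q u s ∧ ∀ y ∈ q, y ∈ S → y = s := by
    intro p hp
    obtain ⟨a, ha, hap⟩ := h12.2.1 u rfl p hp
    obtain ⟨s, hsp, hsS, q, hq, hqS⟩ := hp.exists_first_mem (S := S) ⟨a, hap, hS₁₂ ha⟩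
    refine ⟨s, hsp, ?_, q, hq, hqS⟩
    rcases hsS with rfl | rfl | rfl | rfl
    · exact .inl rfl
    · exact (hv₂ (h34.2.1.of_isPath hq fun a ha haq => hqS a haq (hS₃₄ ha))).elim
    · exact .inr rfl
    · exact (hv₄ (h12.2.1.of_isPath hq fun a ha haq => hqS a haq (hS₁₂ ha))).elim
  have hv₁ : Dominates E root {v₃, v₄} {v₁} := by
    obtain ⟨p, hp, hpv₃⟩ := not_dominates_singleton_iff.1 h34.2.2.1
    obtain ⟨s, hsp, hs | hs, q, hq, hqS⟩ := first_mem p hp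
    · exact hs ▸ h34.2.1.of_isPath hq fun a ha haq => hqS a haq (hS₃₄ ha)
    · exact (hpv₃ v₃ rfl (hs ▸ hsp)).elim
  have hv₃ : Dominates E root {v₁, v₂} {v₃} := by
    obtain ⟨p, hp, hpv₁⟩ := not_dominates_singleton_iff.1 h12.2.2.1
    obtain ⟨s, hsp, hs | hs, q, hq, hqS⟩ := first_mem p hp
    · exact (hpv₁ v₁ rfl (hs ▸ hsp)).elim
    · exact hs ▸ h12.2.1.of_isPath hq fun a ha haq => hqS a haq (hS₁₂ ha)
  have hu : Dominates E root {v₁, v₃} {u} := by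
    rintro _ rfl p hp
    obtain ⟨s, hsp, hs, -⟩ := first_mem p hp
    exact ⟨s, hs, hsp⟩
  have hne : v₁ ≠ v₃ := by
    rintro rfl
    exact h12.2.2.1 (Set.pair_eq_singleton v₁ ▸ hu)
  exact ⟨⟨hne, hu, h12.2.2.1, h34.2.2.1⟩,
    dominates_pair_iff.2 ⟨dominates_of_subset (by simp), hv₃⟩,
    dominates_pair_iff.2 ⟨hv₁, dominates_of_subset (by simp)⟩⟩

end

theorem doubleDom_meet_general {V : Type*} (E : V → V → Prop) (root : V)
    (u v₁ v₂ v₃ v₄ : V)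
    (h12 : DoubleDom E root u v₁ v₂) (h34 : DoubleDom E root u v₃ v₄) :
    ∃ v₅ v₆, DoubleDom E root u v₅ v₆ ∧
      Dominates E root {v₁, v₂} {v₅, v₆} ∧ Dominates E root {v₃, v₄} {v₅, v₆} := by
  by_cases h34_12 : Dominates E root {v₃, v₄} {v₁, v₂}
  · exact ⟨v₁, v₂, h12, dominates_of_subset le_rfl, h34_12⟩
  by_cases h12_34 : Dominates E root {v₁, v₂} {v₃, v₄}
  · exact ⟨v₃, v₄, h34, h12_34, dominates_of_subset le_rfl⟩
  obtain ⟨a₁, a₂, ha, ha_eq, ha₂⟩ := h12.exists_swap_not_dominates h34_12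
  obtain ⟨b₁, b₂, hb, hb_eq, hb₂⟩ := h34.exists_swap_not_dominates h12_34
  rw [← ha_eq, ← hb_eq]
  exact ⟨a₁, b₁, ha.cross_of_not_dominates hb (hb_eq ▸ ha₂) (ha_eq ▸ hb₂)⟩

theorem doubleDom_meet {V : Type*} [Fintype V] (E : V → V → Prop) (root : V)
    (hacyc : Acyclic E) (u v₁ v₂ v₃ v₄ : V)
    (h12 : DoubleDom E root u v₁ v₂) (h34 : DoubleDom E root u v₃ v₄) :
    ∃ v₅ v₆, DoubleDom E root u v₅ v₆ ∧
      Dominates E root {v₁, v₂} {v₅, v₆} ∧ Dominates E root {v₃, v₄} {v₅, v₆} :=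
  doubleDom_meet_general E root u v₁ v₂ v₃ v₄ h12 h34
end

section
/- Every vertex v ≠ root of a finite directed acyclic graph in which every vertex has a path to root has a unique immediate single-vertex dominator: there is a unique vertex d ≠ v such that d dominates v and every other single-vertex strict dominator of v dominates d. -/
/-!
Fix a path from `v` to `root`: every strict dominator of `v` lies on it, `root` among them.
Let `d` be the first one. Any path from `d` to `root`, prefixed by the part of the fixed path
before `d`, is a path from `v`, and its prefix contains no strict dominator of `v`; so every
other strict dominator lies on the path from `d`, i.e. dominates `d`. For uniqueness, two such
vertices would dominate each other, so each would be reachable from the other, which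
acyclicity forbids unless they are equal.
-/

theorem List.exists_eq_append_cons_of_first {α : Type*} {P : α → Prop} {l : List α}
    (h : ∃ x ∈ l, P x) : ∃ s d t, l = s ++ d :: t ∧ P d ∧ ∀ y ∈ s, ¬ P y := by
  classical
  obtain ⟨d, hd⟩ := Option.isSome_iff_exists.1
    (List.find?_isSome (p := fun x => decide (P x)) |>.2 (by simpa using h))
  obtain ⟨hPd, s, t, rfl, hs⟩ := List.find?_eq_some_iff_append.1 hd
  exact ⟨s, d, t, rfl, by simpa using hPd, by simpa using hs⟩

section Paths

variable {V : Type*} {E : V → V → Prop} {p q s t : List V} {a b b' c : V}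

theorem IsPath.getLast_mem (hp : IsPath E p a b) : b ∈ p :=
  List.mem_of_getLast? hp.2.2.1

theorem IsPath.reflTransGen_of_mem (hp : IsPath E p a b) (hc : c ∈ p) :
    Relation.ReflTransGen E a c := by
  obtain ⟨-, hhead, -, hchain⟩ := hp
  refine hchain.induction _ _ (fun _ _ hxy hx => hx.tail hxy) (fun hne' => ?_) c hc
  rw [List.head?_eq_some_head hne', Option.some_inj] at hhead
  rw [hhead]

theorem IsPath.splice (hp : IsPath E (s ++ c :: t) a b) (hs : s ≠ []) (hq : IsPath E q c b') :
    IsPath E (s ++ q) a b' := by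
  obtain ⟨-, hhead, -, hchain⟩ := hp
  obtain ⟨hqne, hqhead, hqlast, hqchain⟩ := hq
  obtain ⟨hschain, -, hlink⟩ := List.isChain_append.1 hchain
  refine ⟨by simp [hs], ?_, ?_, List.isChain_append.2 ⟨hschain, hqchain, ?_⟩⟩
  · rwa [List.head?_append_of_ne_nil _ hs] at hhead ⊢
  · rwa [List.getLast?_append_of_ne_nil _ hqne]
  · rw [hqhead]
    exact hlink

end Paths

section Domination

variable {V : Type*} {E : V → V → Prop} {root d v : V}

theorem dominates_singleton_iff :
    Dominates E root {d} {v} ↔ ∀ p, IsPath E p v root → d ∈ p := by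
  simp [Dominates]

theorem dominates_root (B : Set V) : Dominates E root {root} B :=
  fun _ _ _ hp => ⟨root, rfl, hp.getLast_mem⟩

theorem Acyclic.not_transGen_self (hacyc : Acyclic E) (a : V) : ¬ Relation.TransGen E a a := by
  rw [Relation.TransGen.head'_iff]
  rintro ⟨c, hac, hca⟩
  exact hacyc a c hac hca

theorem Acyclic.dominates_antisymm (hacyc : Acyclic E) {p q : List V}
    (hp : IsPath E p d root) (hq : IsPath E q v root)
    (hdv : Dominates E root {d} {v}) (hvd : Dominates E root {v} {d}) : d = v := by
  have hdv' := hp.reflTransGen_of_mem (dominates_singleton_iff.1 hvd p hp)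
  have hvd' := hq.reflTransGen_of_mem (dominates_singleton_iff.1 hdv q hq)
  rcases Relation.reflTransGen_iff_eq_or_transGen.1 hdv' with h | h
  · exact h.symm
  · exact absurd (h.trans_left hvd') (hacyc.not_transGen_self d)

theorem exists_strict_dominator_dominated_by_all {p : List V} (hp : IsPath E p v root)
    (hv : v ≠ root) :
    ∃ d, d ≠ v ∧ Dominates E root {d} {v} ∧
      ∀ d', d' ≠ v → Dominates E root {d'} {v} → Dominates E root {d'} {d} := by
  obtain ⟨s, d, t, rfl, ⟨hdv, hdom⟩, hfirst⟩ :=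
    List.exists_eq_append_cons_of_first (P := fun x => x ≠ v ∧ Dominates E root {x} {v})
      ⟨root, hp.getLast_mem, hv.symm, dominates_root _⟩
  have hs : s ≠ [] := by
    rintro rfl
    exact hdv (Option.some_inj.1 hp.2.1)
  refine ⟨d, hdv, hdom, fun d' hd'v hd' => dominates_singleton_iff.2 fun q hq => ?_⟩
  rcases List.mem_append.1 (dominates_singleton_iff.1 hd' _ (hp.splice hs hq)) with h | h
  · exact absurd ⟨hd'v, hd'⟩ (hfirst d' h)
  · exact h

end Domination

theorem immediate_single_dominator_unique_general {V : Type*} (E : V → V → Prop)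
    (root : V) (hacyc : Acyclic E)
    (hreach : ∀ v : V, ∃ p : List V, IsPath E p v root)
    (v : V) (hv : v ≠ root) :
    ∃! d : V, d ≠ v ∧ Dominates E root {d} {v} ∧
      ∀ d' : V, d' ≠ v → d' ≠ d → Dominates E root {d'} {v} →
        Dominates E root {d'} {d} := by
  obtain ⟨p, hp⟩ := hreach v
  obtain ⟨d, hdv, hdom, himm⟩ := exists_strict_dominator_dominated_by_all hp hv
  refine ⟨d, ⟨hdv, hdom, fun d' hd'v _ hd' => himm d' hd'v hd'⟩, ?_⟩
  rintro d₂ ⟨hd₂v, hd₂dom, hd₂imm⟩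
  by_contra hne
  obtain ⟨p₂, hp₂⟩ := hreach d₂
  obtain ⟨q, hq⟩ := hreach d
  exact hne (hacyc.dominates_antisymm hp₂ hq
    (himm d₂ hd₂v hd₂dom) (hd₂imm d hdv (Ne.symm hne) hdom))

theorem immediate_single_dominator_unique {V : Type*} [Fintype V] (E : V → V → Prop)
    (root : V) (hacyc : Acyclic E)
    (hreach : ∀ v : V, ∃ p : List V, IsPath E p v root)
    (v : V) (hv : v ≠ root) :
    ∃! d : V, d ≠ v ∧ Dominates E root {d} {v} ∧
      ∀ d' : V, d' ≠ v → d' ≠ d → Dominates E root {d'} {v} →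
        Dominates E root {d'} {d} :=
  immediate_single_dominator_unique_general E root hacyc hreach v hv
end
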